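/- If P ∈ ℝ^{m×m} is row-stochastic and each W_j satisfies ‖W_j ⊗ W_j‖_∞ < 1 (equivalently ‖W_j‖_∞² < 1), then ρ((Pᵀ ⊗ I) diag(W_j ⊗ W_j)) < 1. -/

import Mathlib

/-!
If `M v = μ v` with `v ≠ 0`, let `u_r` be the sup norm of the `r`-th block of `v`. The block rows
of the eigen-equation give `|μ| u_r ≤ ∑_j p_{jr} ‖W_j ⊗ W_j‖_∞ u_j`; summing over `r` and using
that the rows of `P` sum to `1` yields `|μ| ∑ u ≤ (max_j ‖W_j ⊗ W_j‖_∞) ∑ u`. That is, `M` is a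
strict contraction for the norm `v ↦ ∑_r ‖v_r‖_∞`, so all its eigenvalues lie in the open unit disc.
-/

open Matrix Kronecker

/-- Maximum absolute row sum (infinity) norm of a matrix. -/
noncomputable def infNorm {m n : Type*} [Fintype m] [Fintype n] (A : Matrix m n ℝ) : ℝ :=
  ⨆ i, ∑ j, |A i j|

/-- Spectral radius of a real square matrix: largest modulus of a complex eigenvalue
(root of the characteristic polynomial over ℂ). -/
noncomputable def specRad {n : Type*} [Fintype n] [DecidableEq n] (A : Matrix n n ℝ) : ℝ :=
  sSup {r : ℝ | ∃ μ : ℂ, (A.map (algebraMap ℝ ℂ)).charpoly.IsRoot μ ∧ r = ‖μ‖}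

/-- A matrix is row-stochastic if its entries are nonnegative and each row sums to `1`. -/
def RowStochastic {m : Type*} [Fintype m] (P : Matrix m m ℝ) : Prop :=
  (∀ i j, 0 ≤ P i j) ∧ ∀ i, ∑ j, P i j = 1

/-- The matrix `(Pᵀ ⊗ I) diag(W_j ⊗ W_j)`: its `(s, r)` block is `p_{rs} (W_r ⊗ W_r)`. -/
noncomputable def bigM {m n : ℕ} (P : Matrix (Fin m) (Fin m) ℝ)
    (W : Fin m → Matrix (Fin n) (Fin n) ℝ) :
    Matrix (Fin m × (Fin n × Fin n)) (Fin m × (Fin n × Fin n)) ℝ :=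
  Matrix.of fun p q => P q.1 p.1 * (W q.1 ⊗ₖ W q.1) p.2 q.2


theorem specRad_lt_of_forall_eigenvalue {n : Type*} [Fintype n] [DecidableEq n]
    (A : Matrix n n ℝ) {r : ℝ} (hr : 0 < r)
    (h : ∀ (μ : ℂ) (v : n → ℂ), v ≠ 0 → A.map (algebraMap ℝ ℂ) *ᵥ v = μ • v → ‖μ‖ < r) :
    specRad A < r := by
  rw [specRad]
  set S := {r : ℝ | ∃ μ : ℂ, (A.map (algebraMap ℝ ℂ)).charpoly.IsRoot μ ∧ r = ‖μ‖}
  rcases S.eq_empty_or_nonempty with hS | hS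
  · rwa [hS, Real.sSup_empty]
  have hfin : S.Finite := by
    have hroots :=
      Polynomial.finite_setOfPred_isRoot (charpoly_monic (A.map (algebraMap ℝ ℂ))).ne_zero
    refine (hroots.image fun μ : ℂ => ‖μ‖).subset ?_
    rintro _ ⟨μ, hμ, rfl⟩
    exact ⟨μ, hμ, rfl⟩
  obtain ⟨μ, hroot, hμ⟩ := hS.csSup_mem hfin
  have hμ_eig : Module.End.HasEigenvalue (toLin' (A.map (algebraMap ℝ ℂ))) μ := by
    rw [Module.End.hasEigenvalue_iff_mem_spectrum, spectrum_toLin']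
    exact mem_spectrum_of_isRoot_charpoly hroot
  obtain ⟨v, hv⟩ := hμ_eig.exists_hasEigenvector
  exact hμ ▸ h μ v hv.2 hv.apply_eq_smul

theorem norm_eigenvalue_le_of_block_bound {ι κ : Type*} [Fintype ι] [Fintype κ]
    {M : Matrix (ι × κ) (ι × κ) ℂ} {B : Matrix ι ι ℝ} {c : ℝ}
    (hMB : ∀ i k j, ∑ l, ‖M (i, k) (j, l)‖ ≤ B i j) (hBc : ∀ j, ∑ i, B i j ≤ c)
    {μ : ℂ} {v : ι × κ → ℂ} (hv : v ≠ 0) (hμ : M *ᵥ v = μ • v) : ‖μ‖ ≤ c := by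
  obtain ⟨⟨i₀, k₀⟩, hv₀⟩ := Function.ne_iff.mp hv
  set u : ι → ℝ := fun i => ‖fun l => v (i, l)‖
  have hu : ∀ j l, ‖v (j, l)‖ ≤ u j := fun j l => norm_le_pi_norm (fun l => v (j, l)) l
  have hB : ∀ i j, 0 ≤ B i j := fun i j =>
    (Finset.sum_nonneg fun l _ => norm_nonneg _).trans (hMB i k₀ j)
  have hrow : ∀ i, ‖μ‖ * u i ≤ ∑ j, B i j * u j := fun i => by
    rw [← norm_smul]
    refine (pi_norm_le_iff_of_nonneg ?_).mpr fun k => ?_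
    · exact Finset.sum_nonneg fun j _ => mul_nonneg (hB i j) (norm_nonneg _)
    calc ‖(μ • fun l => v (i, l)) k‖ = ‖∑ q, M (i, k) q * v q‖ :=
          congrArg norm (congrFun hμ (i, k)).symm
      _ ≤ ∑ q, ‖M (i, k) q‖ * ‖v q‖ := by
          simpa only [norm_mul] using norm_sum_le Finset.univ fun q => M (i, k) q * v q
      _ = ∑ j, ∑ l, ‖M (i, k) (j, l)‖ * ‖v (j, l)‖ := Fintype.sum_prod_type _
      _ ≤ ∑ j, (∑ l, ‖M (i, k) (j, l)‖) * u j := by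
          simp only [Finset.sum_mul]
          gcongr with j _ l _
          exact hu j l
      _ ≤ ∑ j, B i j * u j := by
          gcongr with j _
          exact hMB i k j
  have hpos : 0 < ∑ i, u i :=
    (norm_pos_iff.mpr hv₀).trans_le ((hu i₀ k₀).trans
      (Finset.single_le_sum (f := u) (fun i _ => norm_nonneg _) (Finset.mem_univ i₀)))
  refine le_of_mul_le_mul_right ?_ hpos
  calc ‖μ‖ * ∑ i, u i = ∑ i, ‖μ‖ * u i := Finset.mul_sum _ _ _
    _ ≤ ∑ i, ∑ j, B i j * u j := Finset.sum_le_sum fun i _ => hrow i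
    _ = ∑ j, (∑ i, B i j) * u j := by rw [Finset.sum_comm]; simp only [Finset.sum_mul]
    _ ≤ ∑ j, c * u j := by gcongr with j _; exact hBc j
    _ = c * ∑ i, u i := (Finset.mul_sum _ _ _).symm

theorem sum_abs_le_infNorm {m n : Type*} [Fintype m] [Fintype n] (A : Matrix m n ℝ) (i : m) :
    ∑ j, |A i j| ≤ infNorm A :=
  le_ciSup (f := fun i => ∑ j, |A i j|) (Set.finite_range _).bddAbove i

theorem sum_norm_bigM_block_le {m n : ℕ} {P : Matrix (Fin m) (Fin m) ℝ} (hP : ∀ i j, 0 ≤ P i j)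
    (W : Fin m → Matrix (Fin n) (Fin n) ℝ) (i : Fin m) (k : Fin n × Fin n) (j : Fin m) :
    ∑ l, ‖(bigM P W).map (algebraMap ℝ ℂ) (i, k) (j, l)‖ ≤ P j i * infNorm (W j ⊗ₖ W j) := by
  simp only [bigM, map_apply, of_apply, Complex.coe_algebraMap, Complex.norm_real,
    Real.norm_eq_abs, abs_mul, abs_of_nonneg (hP j i), ← Finset.mul_sum]
  exact mul_le_mul_of_nonneg_left (sum_abs_le_infNorm _ k) (hP j i)

/-- If `P` is row-stochastic and `‖W_j ⊗ W_j‖_∞ < 1` for every `j`, then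
`ρ((Pᵀ ⊗ I) diag(W_j ⊗ W_j)) < 1`. -/
theorem stmt14 {m n : ℕ} (P : Matrix (Fin m) (Fin m) ℝ)
    (W : Fin m → Matrix (Fin n) (Fin n) ℝ) (hP : RowStochastic P)
    (hW : ∀ j, infNorm (W j ⊗ₖ W j) < 1) :
    specRad (bigM P W) < 1 := by
  refine specRad_lt_of_forall_eigenvalue _ one_pos fun μ v hv hμ => ?_
  obtain ⟨⟨j₀, -⟩, -⟩ := Function.ne_iff.mp hv
  have : Nonempty (Fin m) := ⟨j₀⟩
  obtain ⟨j₁, hj₁⟩ := Finite.exists_max fun j => infNorm (W j ⊗ₖ W j)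
  have hcol : ∀ j, ∑ i, P j i * infNorm (W j ⊗ₖ W j) ≤ infNorm (W j₁ ⊗ₖ W j₁) := fun j => by
    rw [← Finset.sum_mul, hP.2 j, one_mul]
    exact hj₁ j
  exact (norm_eigenvalue_le_of_block_bound (sum_norm_bigM_block_le hP.1 W) hcol hv hμ).trans_lt
    (hW j₁)
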